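/- Assume the field hypotheses (weights not needed) and suppose that 1 ∈ [a, b]. Then for any α ∈ [−1, 1] and any continuous function g : [a, b] → [0, ∞), (∫_Ω A_t^{α} g(A_t) dμ(t)) ⊗_s (∫_Ω A_t^{−α} g(A_t) dμ(t)) ≤ ((a² + b²)/(2ab)) · (∫_Ω g(A_t) dμ(t))^{⊗2}, where real powers A_t^{±α} and g(A_t) are defined by the functional calculus for the positive definite matrices A_t. -/

import Mathlib

/-! Diagonalising `A_t` and `A_s` simultaneously, the kernel
`c • g(A_t) ⊗ g(A_s) - ½ (A_t^α g(A_t) ⊗ A_s^{-α} g(A_s) + A_t^{-α} g(A_t) ⊗ A_s^α g(A_s))`,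
`c = (a² + b²)/(2ab)`, becomes diagonal with entries `g(x) g(y) (c - (u + u⁻¹)/2)` where
`u = (x/y)^α ∈ [a/b, b/a]`; these are nonnegative since `(b - u a)(b - u⁻¹ a) ≥ 0`.
Since the Kronecker product is bilinear and continuous, integrating this positive semidefinite
kernel in `s` and then in `t` gives the claim. -/

open Matrix MeasureTheory
open scoped Kronecker ComplexOrder

attribute [local instance] Matrix.frobeniusNormedAddCommGroup Matrix.frobeniusNormedSpace

/-- Symmetrized Kronecker tensor product: `X ⊗ₛ Y = (1/2)(X ⊗ Y + Y ⊗ X)`. -/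
noncomputable def symKron {k : ℕ} (X Y : Matrix (Fin k) (Fin k) ℂ) :
    Matrix (Fin k × Fin k) (Fin k × Fin k) ℂ :=
  ((1 : ℂ) / 2) • (X ⊗ₖ Y + Y ⊗ₖ X)

open scoped MatrixOrder

section Scalar

variable {a b x y α : ℝ}

theorem rpow_div_le_div_of_mem_Icc (ha : 0 < a) (hx : x ∈ Set.Icc a b) (hy : y ∈ Set.Icc a b)
    (hα : α ∈ Set.Icc (-1 : ℝ) 1) : (x / y) ^ α ≤ b / a := by
  have hx0 : 0 < x := ha.trans_le hx.1
  have hy0 : 0 < y := ha.trans_le hy.1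
  rcases le_total 1 (x / y) with h | h
  · calc (x / y) ^ α ≤ (x / y) ^ (1 : ℝ) := Real.rpow_le_rpow_of_exponent_le h hα.2
      _ = x / y := Real.rpow_one _
      _ ≤ b / a := div_le_div₀ (hx0.le.trans hx.2) hx.2 ha hy.1
  · calc (x / y) ^ α ≤ (x / y) ^ (-1 : ℝ) :=
          Real.rpow_le_rpow_of_exponent_ge (by positivity) h hα.1
      _ = y / x := by rw [Real.rpow_neg_one, inv_div]
      _ ≤ b / a := div_le_div₀ (hy0.le.trans hy.2) hy.2 ha hx.1

theorem add_inv_div_two_le (ha : 0 < a) {u : ℝ} (hu : 0 < u) (hub : u ≤ b / a)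
    (hub' : u⁻¹ ≤ b / a) : (u + u⁻¹) / 2 ≤ (a ^ 2 + b ^ 2) / (2 * a * b) := by
  have hb : 0 < b := (div_pos_iff_of_pos_right ha).mp (hu.trans_le hub)
  have h1 : u * a ≤ b := (le_div_iff₀ ha).mp hub
  have h2 : u⁻¹ * a ≤ b := (le_div_iff₀ ha).mp hub'
  have hu1 : u * u⁻¹ = 1 := mul_inv_cancel₀ hu.ne'
  rw [div_le_div_iff₀ two_pos (by positivity)]
  nlinarith [mul_nonneg (sub_nonneg.mpr h1) (sub_nonneg.mpr h2)]

theorem rpow_mul_rpow_neg_add_le (ha : 0 < a) (hx : x ∈ Set.Icc a b) (hy : y ∈ Set.Icc a b)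
    (hα : α ∈ Set.Icc (-1 : ℝ) 1) {gx gy : ℝ} (hgx : 0 ≤ gx) (hgy : 0 ≤ gy) :
    (x ^ α * gx * (y ^ (-α) * gy) + x ^ (-α) * gx * (y ^ α * gy)) / 2
      ≤ (a ^ 2 + b ^ 2) / (2 * a * b) * (gx * gy) := by
  have hx0 : 0 < x := ha.trans_le hx.1
  have hy0 : 0 < y := ha.trans_le hy.1
  have hxy : x ^ α * y ^ (-α) = (x / y) ^ α := by
    rw [Real.div_rpow hx0.le hy0.le, Real.rpow_neg hy0.le, div_eq_mul_inv]
  have hyx : x ^ (-α) * y ^ α = ((x / y) ^ α)⁻¹ := by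
    rw [Real.div_rpow hx0.le hy0.le, Real.rpow_neg hx0.le, inv_div, div_eq_mul_inv, mul_comm]
  have hu : ((x / y) ^ α)⁻¹ ≤ b / a := by
    rw [← Real.inv_rpow (by positivity), inv_div]
    exact rpow_div_le_div_of_mem_Icc ha hy hx hα
  calc (x ^ α * gx * (y ^ (-α) * gy) + x ^ (-α) * gx * (y ^ α * gy)) / 2
      = ((x ^ α * y ^ (-α) + x ^ (-α) * y ^ α) / 2) * (gx * gy) := by ring
    _ ≤ (a ^ 2 + b ^ 2) / (2 * a * b) * (gx * gy) := by
      rw [hxy, hyx]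
      exact mul_le_mul_of_nonneg_right (add_inv_div_two_le ha (by positivity)
        (rpow_div_le_div_of_mem_Icc ha hx hy hα) hu) (mul_nonneg hgx hgy)

end Scalar

theorem CStarAlgebra.isCompact_Icc {A : Type*} [CStarAlgebra A] [PartialOrder A]
    [StarOrderedRing A] [ProperSpace A] (x y : A) : IsCompact (Set.Icc x y) := by
  refine Metric.isCompact_of_isClosed_isBounded isClosed_Icc
    ((Metric.isBounded_closedBall (x := x) (r := ‖y - x‖)).subset fun z hz => ?_)
  rw [Metric.mem_closedBall, dist_eq_norm]
  exact norm_le_norm_of_nonneg_of_le (sub_nonneg.mpr hz.1) (sub_le_sub_right hz.2 x)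

theorem isSelfAdjoint_and_spectrum_subset_of_mem_Icc {A : Type*} [Ring A] [StarRing A]
    [TopologicalSpace A] [Algebra ℝ A] [ContinuousFunctionalCalculus ℝ A IsSelfAdjoint]
    [PartialOrder A] [StarOrderedRing A] [NonnegSpectrumClass ℝ A] [StarModule ℝ A]
    {a b : ℝ} {x : A} (hx : x ∈ Set.Icc (algebraMap ℝ A a) (algebraMap ℝ A b)) :
    IsSelfAdjoint x ∧ spectrum ℝ x ⊆ Set.Icc a b := by
  have hx_sa : IsSelfAdjoint x := .of_ge hx.1 (.algebraMap A (.all a))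
  exact ⟨hx_sa, fun r hr => ⟨(algebraMap_le_iff_le_spectrum hx_sa).mp hx.1 r hr,
    (le_algebraMap_iff_spectrum_le hx_sa).mp hx.2 r hr⟩⟩

theorem ContinuousLinearMap.integral_integral_apply {Ω Ω' E F G : Type*} [MeasurableSpace Ω]
    [MeasurableSpace Ω'] {μ : Measure Ω} {ν : Measure Ω'}
    [NormedAddCommGroup E] [NormedSpace ℂ E] [CompleteSpace E]
    [NormedAddCommGroup F] [NormedSpace ℂ F] [CompleteSpace F]
    [NormedAddCommGroup G] [NormedSpace ℂ G] [CompleteSpace G]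
    (B : E →L[ℂ] F →L[ℂ] G) {v : Ω → E} {w : Ω' → F} (hv : Integrable v μ)
    (hw : Integrable w ν) :
    ∫ t, ∫ s, B (v t) (w s) ∂ν ∂μ = B (∫ t, v t ∂μ) (∫ s, w s ∂ν) :=
  calc ∫ t, ∫ s, B (v t) (w s) ∂ν ∂μ = ∫ t, B (v t) (∫ s, w s ∂ν) ∂μ := by
        congr 1; funext t; exact (B (v t)).integral_comp_comm hw
    _ = B (∫ t, v t ∂μ) (∫ s, w s ∂ν) := (B.flip (∫ s, w s ∂ν)).integral_comp_comm hv

namespace Matrix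

-- The Frobenius norm induces the product topology `instTopologicalSpaceMatrix` only up to a
-- non-reducible defeq, which instance search does not see: this instance lets `Integrable`
-- elaborate for Frobenius-normed matrices, and `closedIciTopology` below is passed by hand.
noncomputable instance frobeniusContinuousENorm {m n : Type*} [Fintype m] [Fintype n] :
    ContinuousENorm (Matrix m n ℂ) :=
  SeminormedAddGroup.toContinuousENorm

variable {m n : Type*} [Fintype m] [Fintype n]

-- The three Kronecker terms of the theorem as one continuous bilinear map, so that both
-- integrals can be pulled through them at once.
variable (n) in
noncomputable def kantorovichForm (c : ℝ) :
    (Matrix n n ℂ × Matrix n n ℂ × Matrix n n ℂ) →L[ℂ]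
      (Matrix n n ℂ × Matrix n n ℂ × Matrix n n ℂ) →L[ℂ] Matrix (n × n) (n × n) ℂ :=
  let π₁ := LinearMap.fst ℂ (Matrix n n ℂ) (Matrix n n ℂ × Matrix n n ℂ)
  let π₂ := LinearMap.fst ℂ (Matrix n n ℂ) (Matrix n n ℂ) ∘ₗ
    LinearMap.snd ℂ (Matrix n n ℂ) (Matrix n n ℂ × Matrix n n ℂ)
  let π₃ := LinearMap.snd ℂ (Matrix n n ℂ) (Matrix n n ℂ) ∘ₗ
    LinearMap.snd ℂ (Matrix n n ℂ) (Matrix n n ℂ × Matrix n n ℂ)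
  let κ := kroneckerBilinear (R := ℂ) (l := n) (m := n) (n := n) (p := n) (α := ℂ)
  LinearMap.toContinuousLinearMap <| LinearMap.toContinuousLinearMap.toLinearMap ∘ₗ
    (c • κ.compl₁₂ π₁ π₁ - (1 / 2 : ℂ) • (κ.compl₁₂ π₂ π₂ + κ.compl₁₂ π₃ π₃))

@[simp]
theorem kantorovichForm_apply (c : ℝ) (P Q : Matrix n n ℂ × Matrix n n ℂ × Matrix n n ℂ) :
    kantorovichForm n c P Q
      = c • (P.1 ⊗ₖ Q.1) - (1 / 2 : ℂ) • (P.2.1 ⊗ₖ Q.2.1 + P.2.2 ⊗ₖ Q.2.2) := by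
  simp [kantorovichForm, kroneckerBilinear, kroneckerMapBilinear_apply_apply]

variable [DecidableEq m] [DecidableEq n]

-- The operator norm makes `Matrix n n ℂ` a C⋆-algebra; these statements only involve its topology.
theorem isCompact_Icc (X Y : Matrix n n ℂ) : IsCompact (Set.Icc X Y) := by
  open scoped Matrix.Norms.L2Operator in exact CStarAlgebra.isCompact_Icc X Y

theorem continuous_cfc_selfAdjointPart {f : ℝ → ℝ} (hf : Continuous f) :
    Continuous fun X : Matrix n n ℂ => cfc f ((2⁻¹ : ℝ) • (X + star X)) := by
  open scoped Matrix.Norms.L2Operator in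
  exact Continuous.cfc_of_mem_nhdsSet (s := Set.univ) f (by simp) (by fun_prop)
    (fun X => (IsSelfAdjoint.all _).smul (.add_star_self X)) hf.continuousOn

theorem closedIciTopology : ClosedIciTopology (Matrix n n ℂ) := by
  open scoped Matrix.Norms.L2Operator in exact inferInstance

theorem cfc_mul_cfc (f g : ℝ → ℝ) (X : Matrix n n ℂ) :
    cfc f X * cfc g X = cfc (fun x => f x * g x) X :=
  (cfc_mul f g X (X.finite_real_spectrum.continuousOn _)
    (X.finite_real_spectrum.continuousOn _)).symm

section Integral

variable {Ω : Type*} [MeasurableSpace Ω] {μ : Measure Ω}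

theorem posSemidef_integral {F : Ω → Matrix n n ℂ} (hF : ∀ t, (F t).PosSemidef) :
    (∫ t, F t ∂μ).PosSemidef :=
  LE.le.posSemidef <|
    @integral_nonneg _ _ _ _ _ _ _ _ _ closedIciTopology _ fun t => (hF t).nonneg

theorem posSemidef_apply_integral_integral {E F : Type*}
    [NormedAddCommGroup E] [NormedSpace ℂ E] [CompleteSpace E]
    [NormedAddCommGroup F] [NormedSpace ℂ F] [CompleteSpace F]
    (B : E →L[ℂ] F →L[ℂ] Matrix n n ℂ) {v : Ω → E} {w : Ω → F} (hv : Integrable v μ)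
    (hw : Integrable w μ) (hB : ∀ t s, (B (v t) (w s)).PosSemidef) :
    (B (∫ t, v t ∂μ) (∫ s, w s ∂μ)).PosSemidef :=
  (congrArg PosSemidef (B.integral_integral_apply hv hw)).mp
    (posSemidef_integral fun t => posSemidef_integral (hB t))

theorem integrable_cfc [IsFiniteMeasure μ] {A : Ω → Matrix n n ℂ}
    (hA : AEStronglyMeasurable A μ) {a b : ℝ} (hab : a ≤ b)
    (hA_mem : ∀ t, A t ∈ Set.Icc (algebraMap ℝ _ a) (algebraMap ℝ _ b)) {f : ℝ → ℝ}
    (hf : ContinuousOn f (Set.Icc a b)) : Integrable (fun t => cfc f (A t)) μ := by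
  -- `cfc f` is continuous only on self-adjoint matrices with spectrum in `[a, b]`;
  -- `G` is a continuous function on all matrices that agrees with it there.
  set f' := (Set.Icc a b).domRestrict f
  set G := fun X : Matrix n n ℂ => cfc (Set.IccExtend hab f') ((2⁻¹ : ℝ) • (X + star X))
  have hG : Continuous G := continuous_cfc_selfAdjointPart hf.domRestrict.Icc_extend'
  have hfG (t : Ω) : cfc f (A t) = G (A t) := by
    obtain ⟨hsa, hspec⟩ := isSelfAdjoint_and_spectrum_subset_of_mem_Icc (hA_mem t)
    have hA_sym : (2⁻¹ : ℝ) • (A t + star (A t)) = A t := by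
      rw [hsa.star_eq, ← two_smul ℝ, smul_smul, inv_mul_cancel₀ two_ne_zero, one_smul]
    simp only [G, hA_sym]
    exact cfc_congr fun x hx => (Set.IccExtend_of_mem hab f' (hspec hx)).symm
  obtain ⟨C, hC⟩ := (isCompact_Icc _ _).exists_bound_of_continuousOn hG.continuousOn
  simp_rw [hfG]
  exact Integrable.of_bound (hG.comp_aestronglyMeasurable hA) C
    (ae_of_all _ fun t => hC _ (hA_mem t))

end Integral

variable {X : Matrix m m ℂ} {Y : Matrix n n ℂ}

theorem IsHermitian.cfc_kronecker_cfc (hX : X.IsHermitian) (hY : Y.IsHermitian) (f g : ℝ → ℝ) :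
    cfc f X ⊗ₖ cfc g Y =
      ((hX.eigenvectorUnitary : Matrix m m ℂ) ⊗ₖ (hY.eigenvectorUnitary : Matrix n n ℂ)) *
        diagonal (fun q => ((f (hX.eigenvalues q.1) * g (hY.eigenvalues q.2) : ℝ) : ℂ)) *
        ((hX.eigenvectorUnitary : Matrix m m ℂ) ⊗ₖ (hY.eigenvectorUnitary : Matrix n n ℂ))ᴴ := by
  rw [hX.cfc_eq, hY.cfc_eq, IsHermitian.cfc, IsHermitian.cfc, Unitary.conjStarAlgAut_apply,
    Unitary.conjStarAlgAut_apply, mul_kronecker_mul, mul_kronecker_mul,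
    diagonal_kronecker_diagonal, conjTranspose_kronecker, star_eq_conjTranspose,
    star_eq_conjTranspose]
  congr 3
  funext q
  simp

theorem IsHermitian.posSemidef_smul_kronecker_sub (hX : X.IsHermitian) (hY : Y.IsHermitian)
    {c : ℝ} {γ φ ψ : ℝ → ℝ}
    (h : ∀ i j, (φ (hX.eigenvalues i) * ψ (hY.eigenvalues j)
        + ψ (hX.eigenvalues i) * φ (hY.eigenvalues j)) / 2
      ≤ c * (γ (hX.eigenvalues i) * γ (hY.eigenvalues j))) :
    (c • (cfc γ X ⊗ₖ cfc γ Y)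
      - (1 / 2 : ℂ) • (cfc φ X ⊗ₖ cfc ψ Y + cfc ψ X ⊗ₖ cfc φ Y)).PosSemidef := by
  set W := (hX.eigenvectorUnitary : Matrix m m ℂ) ⊗ₖ (hY.eigenvectorUnitary : Matrix n n ℂ)
  set D := fun (f g : ℝ → ℝ) =>
    diagonal (fun q : m × n => ((f (hX.eigenvalues q.1) * g (hY.eigenvalues q.2) : ℝ) : ℂ))
  have hW : c • (W * D γ γ * Wᴴ) - (1 / 2 : ℂ) • (W * D φ ψ * Wᴴ + W * D ψ φ * Wᴴ)
      = W * (c • D γ γ - (1 / 2 : ℂ) • (D φ ψ + D ψ φ)) * Wᴴ := by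
    simp only [Matrix.mul_sub, Matrix.sub_mul, Matrix.mul_add, Matrix.add_mul, Matrix.mul_smul,
      Matrix.smul_mul]
  have hD : c • D γ γ - (1 / 2 : ℂ) • (D φ ψ + D ψ φ) = diagonal fun q =>
      ((c * (γ (hX.eigenvalues q.1) * γ (hY.eigenvalues q.2))
        - (φ (hX.eigenvalues q.1) * ψ (hY.eigenvalues q.2)
          + ψ (hX.eigenvalues q.1) * φ (hY.eigenvalues q.2)) / 2 : ℝ) : ℂ) := by
    ext q r
    by_cases hqr : q = r <;> simp [D, hqr]
    ring
  rw [hX.cfc_kronecker_cfc hY, hX.cfc_kronecker_cfc hY, hX.cfc_kronecker_cfc hY, hW, hD]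
  refine (posSemidef_diagonal_iff.mpr fun q => ?_).mul_mul_conjTranspose_same W
  rw [Complex.zero_le_real, sub_nonneg]
  exact h q.1 q.2

theorem posSemidef_kantorovichForm_cfc {a b α : ℝ} (ha : 0 < a) (hα : α ∈ Set.Icc (-1 : ℝ) 1)
    {g : ℝ → ℝ} (hg : ∀ x ∈ Set.Icc a b, 0 ≤ g x) {Z₁ Z₂ : Matrix n n ℂ}
    (hZ₁ : Z₁.IsHermitian ∧ spectrum ℝ Z₁ ⊆ Set.Icc a b)
    (hZ₂ : Z₂.IsHermitian ∧ spectrum ℝ Z₂ ⊆ Set.Icc a b) :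
    (kantorovichForm n ((a ^ 2 + b ^ 2) / (2 * a * b))
      (cfc g Z₁, cfc (fun x => x ^ α * g x) Z₁, cfc (fun x => x ^ (-α) * g x) Z₁)
      (cfc g Z₂, cfc (fun x => x ^ (-α) * g x) Z₂, cfc (fun x => x ^ α * g x) Z₂)).PosSemidef := by
  have heig₁ i : hZ₁.1.eigenvalues i ∈ Set.Icc a b :=
    hZ₁.2 (hZ₁.1.eigenvalues_mem_spectrum_real i)
  have heig₂ j : hZ₂.1.eigenvalues j ∈ Set.Icc a b :=
    hZ₂.2 (hZ₂.1.eigenvalues_mem_spectrum_real j)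
  simpa using hZ₁.1.posSemidef_smul_kronecker_sub hZ₂.1 (γ := g)
    (φ := fun x => x ^ α * g x) (ψ := fun x => x ^ (-α) * g x) fun i j =>
      rpow_mul_rpow_neg_add_le ha (heig₁ i) (heig₂ j) hα (hg _ (heig₁ i)) (hg _ (heig₂ j))

end Matrix

theorem kantorovich_integral_tensor_rpow_g_general {k : ℕ} {Ω : Type*} [MeasurableSpace Ω]
    (μ : Measure Ω) [IsFiniteMeasure μ] (a b : ℝ) (ha : 0 < a) (hab : a ≤ b)
    (A : Ω → Matrix (Fin k) (Fin k) ℂ) (hAmeas : AEStronglyMeasurable A μ)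
    (hAa : ∀ t, (A t - a • 1).PosSemidef)
    (hAb : ∀ t, ((b • 1 : Matrix (Fin k) (Fin k) ℂ) - A t).PosSemidef)
    (α : ℝ) (hα : α ∈ Set.Icc (-1 : ℝ) 1)
    (g : ℝ → ℝ) (hg_cont : ContinuousOn g (Set.Icc a b))
    (hg_nonneg : ∀ x ∈ Set.Icc a b, 0 ≤ g x) :
    (((a ^ 2 + b ^ 2) / (2 * a * b)) • ((∫ t, cfc g (A t) ∂μ) ⊗ₖ (∫ t, cfc g (A t) ∂μ))
      - symKron (∫ t, cfc (fun x : ℝ => x ^ α) (A t) * cfc g (A t) ∂μ)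
          (∫ t, cfc (fun x : ℝ => x ^ (-α)) (A t) * cfc g (A t) ∂μ)).PosSemidef := by
  have hA (t : Ω) : A t ∈ Set.Icc (algebraMap ℝ _ a) (algebraMap ℝ _ b) := by
    simp only [Algebra.algebraMap_eq_smul_one]
    exact ⟨hAa t, hAb t⟩
  have hint {f : ℝ → ℝ} (hf : ContinuousOn f (Set.Icc a b)) :
      Integrable (fun t => cfc f (A t)) μ :=
    integrable_cfc hAmeas hab hA hf
  have hcont (β : ℝ) : ContinuousOn (fun x : ℝ => x ^ β * g x) (Set.Icc a b) :=
    (ContinuousOn.rpow_const continuousOn_id fun x hx => .inl (ha.trans_le hx.1).ne').mul hg_cont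
  set φ := fun x : ℝ => x ^ α * g x
  set ψ := fun x : ℝ => x ^ (-α) * g x
  have iγ := hint hg_cont
  have iφ := hint (hcont α)
  have iψ := hint (hcont (-α))
  have key : (kantorovichForm (Fin k) ((a ^ 2 + b ^ 2) / (2 * a * b))
      (∫ t, (cfc g (A t), cfc φ (A t), cfc ψ (A t)) ∂μ)
      (∫ t, (cfc g (A t), cfc ψ (A t), cfc φ (A t)) ∂μ)).PosSemidef :=
    posSemidef_apply_integral_integral _ (iγ.prodMk (iφ.prodMk iψ)) (iγ.prodMk (iψ.prodMk iφ))
      fun t s => posSemidef_kantorovichForm_cfc ha hα hg_nonneg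
        (isSelfAdjoint_and_spectrum_subset_of_mem_Icc (hA t))
        (isSelfAdjoint_and_spectrum_subset_of_mem_Icc (hA s))
  rw [integral_pair iγ (iφ.prodMk iψ), integral_pair iφ iψ, integral_pair iγ (iψ.prodMk iφ),
    integral_pair iψ iφ] at key
  simpa [symKron, cfc_mul_cfc] using key

/-- Corollary 5.5 (inequality (5.4)): if `1 ∈ [a,b]`, then for any `α ∈ [-1,1]` and continuous
`g : [a,b] → [0,∞)`,
`(∫ A_t^α g(A_t) dμ) ⊗ₛ (∫ A_t^{-α} g(A_t) dμ) ≤ ((a²+b²)/(2ab)) (∫ g(A_t) dμ)^{⊗2}`. -/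
theorem kantorovich_integral_tensor_rpow_g {k : ℕ} {Ω : Type*} [MeasurableSpace Ω]
    (μ : Measure Ω) [IsFiniteMeasure μ] (a b : ℝ) (ha : 0 < a) (hab : a ≤ b)
    (h1 : 1 ∈ Set.Icc a b)
    (A : Ω → Matrix (Fin k) (Fin k) ℂ) (hAmeas : AEStronglyMeasurable A μ)
    (hAherm : ∀ t, (A t).IsHermitian)
    (hAa : ∀ t, (A t - a • 1).PosSemidef)
    (hAb : ∀ t, ((b • 1 : Matrix (Fin k) (Fin k) ℂ) - A t).PosSemidef)
    (α : ℝ) (hα : α ∈ Set.Icc (-1 : ℝ) 1)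
    (g : ℝ → ℝ) (hg_cont : ContinuousOn g (Set.Icc a b))
    (hg_nonneg : ∀ x ∈ Set.Icc a b, 0 ≤ g x) :
    (((a ^ 2 + b ^ 2) / (2 * a * b)) • ((∫ t, cfc g (A t) ∂μ) ⊗ₖ (∫ t, cfc g (A t) ∂μ))
      - symKron (∫ t, cfc (fun x : ℝ => x ^ α) (A t) * cfc g (A t) ∂μ)
          (∫ t, cfc (fun x : ℝ => x ^ (-α)) (A t) * cfc g (A t) ∂μ)).PosSemidef :=
  kantorovich_integral_tensor_rpow_g_general μ a b ha hab A hAmeas hAa hAb α hα g hg_cont hg_nonneg
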